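/- arXiv:1801.02868 — 2 statements merged into one kernel-verified Lean document; each statement's English description precedes it below -/
import Mathlib

section
/- For an (m,n,X,δ) BNSI problem with bipartite graph B, the optimal linear codelength over F_q equals n if and only if Φ(B) is empty, where Φ(B) is the set of non-empty C ⊆ [n] such that for every i ∈ [m], |X_i ∩ C| = 0 or |X_i ∩ C| ≥ 2δ+1. -/
open Matrix

/-- Hamming weight of `z` restricted to the coordinates in `S`. -/
def wtOn {ι F : Type*} [Zero F] [DecidableEq F] (S : Finset ι) (z : ι → F) : ℕ :=
  (S.filter fun j => z j ≠ 0).card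

/-- Hamming weight of a vector. -/
def wt {ι F : Type*} [Fintype ι] [Zero F] [DecidableEq F] (z : ι → F) : ℕ :=
  (Finset.univ.filter fun j => z j ≠ 0).card

/-- `L` is a valid encoder matrix for the BNSI problem with demand sets `X` and error
bound `δ` iff `z ⬝ᵥ L ≠ 0` for every `z` with `1 ≤ wt(z_{X i}) ≤ 2δ` for some receiver `i`. -/
def ValidEncoder {κ ι F : Type*} [Fintype ι] [Field F] [DecidableEq F] {N : ℕ}
    (X : κ → Finset ι) (δ : ℕ) (L : Matrix ι (Fin N) F) : Prop :=
  ∀ z : ι → F, (∃ i, 1 ≤ wtOn (X i) z ∧ wtOn (X i) z ≤ 2 * δ) → Matrix.vecMul z L ≠ 0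

/-- Optimal codelength of a linear coding scheme for the BNSI problem over `F`. -/
noncomputable def Nopt (F : Type*) [Field F] [DecidableEq F] {κ ι : Type*} [Fintype ι]
    (X : κ → Finset ι) (δ : ℕ) : ℕ :=
  sInf {N : ℕ | ∃ L : Matrix ι (Fin N) F, ValidEncoder X δ L}

/-- `Φ(B)`: the collection of non-empty `C ⊆ [n]` such that every demand set meets `C`
in either `0` or at least `2δ+1` elements. -/
def Phi {m n : ℕ} (X : Fin m → Finset (Fin n)) (δ : ℕ) : Set (Finset (Fin n)) :=
  {C | C.Nonempty ∧ ∀ i, (X i ∩ C).card = 0 ∨ 2 * δ + 1 ≤ (X i ∩ C).card}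

/-! The identity matrix is always a valid encoder, so `Nopt ≤ n`. A valid encoder of length
`N < n` has a non-zero left-kernel vector `z`, and validity says precisely that the support of
every such `z` lies in `Φ(B)`. Conversely, for `C ∈ Φ(B)` a matrix of length `n - 1` whose left
kernel is the line spanned by the indicator vector of `C` is a valid encoder. -/

open Finset

section Encoder

variable {κ ι F : Type*} [Field F]

lemma wtOn_eq_card_inter_support [DecidableEq F] [Fintype ι] [DecidableEq ι] (S : Finset ι)
    (z : ι → F) : wtOn S z = #(S ∩ univ.filter (z · ≠ 0)) := by
  rw [wtOn, inter_filter, inter_univ]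

lemma wtOn_smul_indicator [DecidableEq F] [DecidableEq ι] (S C : Finset ι) (c : F) :
    wtOn S (c • fun j => if j ∈ C then (1 : F) else 0) = if c = 0 then 0 else #(S ∩ C) := by
  split_ifs with hc
  · simp [hc, wtOn]
  · simp [wtOn, hc, filter_mem_eq_inter]

lemma validEncoder_iff [DecidableEq F] [Fintype ι] {N : ℕ} (X : κ → Finset ι) (δ : ℕ)
    (L : Matrix ι (Fin N) F) :
    ValidEncoder X δ L ↔
      ∀ z : ι → F, z ᵥ* L = 0 → ∀ i, wtOn (X i) z = 0 ∨ 2 * δ + 1 ≤ wtOn (X i) z := by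
  refine forall_congr' fun z => ⟨fun h hz i => ?_, fun h ⟨i, h1, h2⟩ hz => ?_⟩
  · by_contra! hi
    exact h ⟨i, by omega, by omega⟩ hz
  · have := h hz i
    omega

lemma validEncoder_one [DecidableEq F] {n : ℕ} (X : κ → Finset (Fin n)) (δ : ℕ) :
    ValidEncoder X δ (1 : Matrix (Fin n) (Fin n) F) := by
  rw [validEncoder_iff]
  intro z hz i
  rw [Matrix.vecMul_one] at hz
  simp [hz, wtOn]

lemma Nopt_le_of_validEncoder [DecidableEq F] [Fintype ι] {X : κ → Finset ι} {δ N : ℕ}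
    {L : Matrix ι (Fin N) F} (hL : ValidEncoder X δ L) : Nopt F X δ ≤ N :=
  Nat.sInf_le ⟨L, hL⟩

lemma exists_ne_zero_vecMul_eq_zero [Fintype ι] {μ : Type*} [Fintype μ] (L : Matrix ι μ F)
    (h : Fintype.card μ < Fintype.card ι) : ∃ z ≠ 0, z ᵥ* L = 0 := by
  have hker : LinearMap.ker L.vecMulLinear ≠ ⊥ :=
    LinearMap.ker_ne_bot_of_finrank_lt (by simpa using h)
  obtain ⟨z, hz, hz0⟩ := Submodule.exists_mem_ne_zero_of_ne_bot hker
  exact ⟨z, hz0, hz⟩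

lemma exists_matrix_forall_vecMul_eq_zero_iff [Fintype ι] [DecidableEq ι]
    (W : Submodule F (ι → F)) {N : ℕ} (hN : N + Module.finrank F W = Fintype.card ι) :
    ∃ L : Matrix ι (Fin N) F, ∀ z, z ᵥ* L = 0 ↔ z ∈ W := by
  have hrank : Module.finrank F ((ι → F) ⧸ W) = Module.finrank F (Fin N → F) := by
    have := W.finrank_quotient_add_finrank
    simp only [Module.finrank_fintype_fun_eq_card, Fintype.card_fin] at this ⊢
    omega
  let f := (LinearEquiv.ofFinrankEq _ _ hrank).toLinearMap ∘ₗ W.mkQ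
  refine ⟨(LinearMap.toMatrix' f)ᵀ, fun z => ?_⟩
  rw [Matrix.vecMul_transpose, LinearMap.toMatrix'_mulVec, ← LinearMap.mem_ker,
    LinearEquiv.ker_comp, Submodule.ker_mkQ]

end Encoder

section Phi

variable {F : Type*} [Field F] [DecidableEq F] {m n : ℕ} (X : Fin m → Finset (Fin n)) (δ : ℕ)

lemma support_mem_Phi {N : ℕ} {L : Matrix (Fin n) (Fin N) F} (hL : ValidEncoder X δ L)
    {z : Fin n → F} (hz : z ≠ 0) (hzL : z ᵥ* L = 0) : univ.filter (z · ≠ 0) ∈ Phi X δ := by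
  refine ⟨?_, fun i => ?_⟩
  · obtain ⟨j, hj⟩ := Function.ne_iff.mp hz
    exact ⟨j, by simpa using hj⟩
  · simpa only [wtOn_eq_card_inter_support] using (validEncoder_iff X δ L).mp hL z hzL i

lemma exists_validEncoder_of_mem_Phi {C : Finset (Fin n)} (hC : C ∈ Phi X δ) :
    ∃ L : Matrix (Fin n) (Fin (n - 1)) F, ValidEncoder X δ L := by
  set v : Fin n → F := fun j => if j ∈ C then 1 else 0
  obtain ⟨j, hj⟩ := hC.1
  have hv : v ≠ 0 := Function.ne_iff.mpr ⟨j, by simp [v, hj]⟩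
  obtain ⟨L, hL⟩ := exists_matrix_forall_vecMul_eq_zero_iff (F ∙ v)
    (N := n - 1) (by rw [finrank_span_singleton hv, Fintype.card_fin]; have := j.pos; omega)
  refine ⟨L, (validEncoder_iff X δ L).mpr fun z hz i => ?_⟩
  obtain ⟨c, rfl⟩ := Submodule.mem_span_singleton.mp ((hL z).mp hz)
  rw [wtOn_smul_indicator]
  split_ifs
  · exact .inl rfl
  · exact hC.2 i

variable (F) in
lemma le_Nopt_of_Phi_eq_empty (hΦ : Phi X δ = ∅) : n ≤ Nopt F X δ := by
  obtain ⟨L, hL⟩ := Nat.sInf_mem (s := {N | ∃ L : Matrix (Fin n) (Fin N) F, ValidEncoder X δ L})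
    ⟨n, 1, validEncoder_one X δ⟩
  by_contra! hlt
  obtain ⟨z, hz, hzL⟩ := exists_ne_zero_vecMul_eq_zero L (by simpa [Nopt] using hlt)
  simpa [hΦ] using support_mem_Phi X δ hL hz hzL

end Phi

theorem stmt9_general {F : Type*} {m n : ℕ} [Field F] [DecidableEq F]
    (X : Fin m → Finset (Fin n)) (δ : ℕ) :
    Nopt F X δ = n ↔ Phi X δ = ∅ := by
  refine ⟨fun hN => Set.eq_empty_of_forall_notMem fun C hC => ?_, fun hΦ => ?_⟩
  · obtain ⟨L, hL⟩ := exists_validEncoder_of_mem_Phi (F := F) X δ hC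
    obtain ⟨j, -⟩ := hC.1
    have hle := Nopt_le_of_validEncoder hL
    have hn := j.pos
    omega
  · exact le_antisymm (Nopt_le_of_validEncoder (validEncoder_one X δ))
      (le_Nopt_of_Phi_eq_empty F X δ hΦ)

theorem stmt9 {F : Type*} {m n : ℕ} [Field F] [DecidableEq F]
    (X : Fin m → Finset (Fin n)) (δ : ℕ) (hX : ∀ i, (X i).Nonempty) :
    Nopt F X δ = n ↔ Phi X δ = ∅ :=
  stmt9_general X δ
end

section
/- A matrix L ∈ F_q^{n×N} is a valid encoder matrix for the (m,n,X,δ) BNSI problem if and only if it is a valid scalar linear index code encoder for the index coding problem (m̂,n,X̂,f) constructed from it (receivers: for each i ∈ [m], p ∈ X_i, and Q ⊆ X_i\{p} with |Q| = min(|X_i|−1, 2δ−1), a receiver demanding p with side information indexed by X_i \ (Q ∪ {p})). -/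
open Matrix

/-!
Both sides quantify over the same set of interference vectors `z`. If `z` has between `1` and
`2δ` nonzero entries on `X i`, choose one of them, `p`, and pad the rest of the support inside
`X i \ {p}` to a set `Q` of the prescribed size `min (|X i| - 1) (2δ - 1)`; conversely, such a
pair `(p, Q)` confines the support of `z` on `X i` to `Q ∪ {p}`, of size at most `2δ`.
-/

section

variable {ι F : Type*} [Zero F] [DecidableEq F] {S : Finset ι} {z : ι → F}

lemma one_le_wtOn_iff : 1 ≤ wtOn S z ↔ ∃ p ∈ S, z p ≠ 0 := by
  rw [wtOn, Nat.one_le_iff_ne_zero, ← Nat.pos_iff_ne_zero, Finset.card_pos,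
    Finset.filter_nonempty_iff]

lemma filter_ne_zero_subset_iff [DecidableEq ι] {T : Finset ι} :
    S.filter (fun j => z j ≠ 0) ⊆ T ↔ ∀ j ∈ S \ T, z j = 0 := by
  simp only [Finset.subset_iff, Finset.mem_filter, Finset.mem_sdiff, and_imp]
  exact forall_congr' fun j => by tauto

lemma wtOn_le_card_insert_of_eq_zero [DecidableEq ι] {p : ι} {Q : Finset ι}
    (hzero : ∀ j ∈ S \ insert p Q, z j = 0) : wtOn S z ≤ Q.card + 1 :=
  (Finset.card_le_card (filter_ne_zero_subset_iff.2 hzero)).trans (Finset.card_insert_le p Q)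

lemma exists_card_eq_min_of_wtOn_le [DecidableEq ι] {k : ℕ} {p : ι} (hp : p ∈ S)
    (hzp : z p ≠ 0) (hwt : wtOn S z ≤ k) :
    ∃ Q ⊆ S \ {p}, Q.card = min (S.card - 1) (k - 1) ∧ ∀ j ∈ S \ insert p Q, z j = 0 := by
  set supp := S.filter fun j => z j ≠ 0
  have hsupp : supp ⊆ S := Finset.filter_subset _ _
  have hp_supp : p ∈ supp := Finset.mem_filter.2 ⟨hp, hzp⟩
  have hlower : (supp \ {p}).card ≤ min (S.card - 1) (k - 1) := by
    have hwt' : supp.card ≤ k := hwt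
    have := Finset.card_le_card hsupp
    rw [Finset.card_sdiff_of_subset (Finset.singleton_subset_iff.2 hp_supp), Finset.card_singleton]
    exact le_min (by omega) (by omega)
  have hupper : min (S.card - 1) (k - 1) ≤ (S \ {p}).card := by
    rw [Finset.card_sdiff_of_subset (Finset.singleton_subset_iff.2 hp), Finset.card_singleton]
    exact min_le_left _ _
  obtain ⟨Q, hsuppQ, hQS, hQcard⟩ :=
    Finset.exists_subsuperset_card_eq (Finset.sdiff_subset_sdiff hsupp le_rfl) hlower hupper
  refine ⟨Q, hQS, hQcard, filter_ne_zero_subset_iff.1 fun j hj => ?_⟩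
  exact Finset.mem_insert.2 <| or_iff_not_imp_left.2 fun hjp =>
    hsuppQ (Finset.mem_sdiff.2 ⟨hj, Finset.notMem_singleton.2 hjp⟩)

lemma one_le_wtOn_and_wtOn_le_iff [DecidableEq ι] {k : ℕ} (hk : 1 ≤ k) :
    (1 ≤ wtOn S z ∧ wtOn S z ≤ k) ↔
      ∃ p Q, p ∈ S ∧ Q ⊆ S \ {p} ∧ Q.card = min (S.card - 1) (k - 1) ∧
        (∀ j ∈ S \ insert p Q, z j = 0) ∧ z p ≠ 0 := by
  constructor
  · rintro ⟨hpos, hwt⟩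
    obtain ⟨p, hp, hzp⟩ := one_le_wtOn_iff.1 hpos
    obtain ⟨Q, hQS, hQcard, hzero⟩ := exists_card_eq_min_of_wtOn_le hp hzp hwt
    exact ⟨p, Q, hp, hQS, hQcard, hzero, hzp⟩
  · rintro ⟨p, Q, hp, -, hQcard, hzero, hzp⟩
    refine ⟨one_le_wtOn_iff.2 ⟨p, hp, hzp⟩, ?_⟩
    have := wtOn_le_card_insert_of_eq_zero hzero
    omega

end

theorem stmt19 {F : Type*} {m n N : ℕ} [Field F] [DecidableEq F]
    (X : Fin m → Finset (Fin n)) (δ : ℕ) (hδ : 1 ≤ δ)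
    (L : Matrix (Fin n) (Fin N) F) :
    ValidEncoder X δ L ↔
      ∀ z : Fin n → F,
        (∃ (i : Fin m) (p : Fin n) (Q : Finset (Fin n)),
          p ∈ X i ∧ Q ⊆ X i \ {p} ∧ Q.card = min ((X i).card - 1) (2 * δ - 1) ∧
          (∀ j ∈ X i \ insert p Q, z j = 0) ∧ z p ≠ 0) →
        Matrix.vecMul z L ≠ 0 := by
  refine forall_congr' fun z => imp_congr_left (exists_congr fun i => ?_)
  exact one_le_wtOn_and_wtOn_le_iff (by omega)
end
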